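/- arXiv:1306.4455 — 2 statements merged into one kernel-verified Lean document; each statement's English description precedes it below -/
import Mathlib

section
/- For every real number r > 1 and all vectors c, d ∈ ℝ^d (d ≥ 1): ⟨‖c‖^{r−2}c − ‖d‖^{r−2}d, c⟩ ≥ ((r−1)/r)·(‖c‖^r − ‖d‖^r). -/
/-!
Expanding the inner product, the diagonal term is `‖c‖ ^ r` and, by Cauchy–Schwarz, the cross
term is at most `‖c‖ * ‖d‖ ^ (r - 1)`. Young's inequality with the conjugate exponents `r` and
`r / (r - 1)` bounds the latter by `‖c‖ ^ r / r + (r - 1) / r * ‖d‖ ^ r`, which rearranges to the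
claim.
-/

open RealInnerProductSpace

namespace Real

theorem mul_rpow_sub_one_le {a b r : ℝ} (ha : 0 ≤ a) (hb : 0 ≤ b) (hr : 1 < r) :
    a * b ^ (r - 1) ≤ a ^ r / r + (r - 1) / r * b ^ r := by
  have hpow : (b ^ (r - 1)) ^ (r / (r - 1)) = b ^ r := by
    rw [← rpow_mul hb, mul_div_cancel₀ r (sub_ne_zero.mpr hr.ne')]
  have hcoeff : (r - 1) / r * b ^ r = b ^ r / (r / (r - 1)) := by
    rw [div_div_eq_mul_div, mul_comm, mul_div_assoc]
  have hconj : r.HolderConjugate (r / (r - 1)) := HolderConjugate.conjExponent hr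
  simpa only [hpow, hcoeff] using young_inequality_of_nonneg ha (rpow_nonneg hb (r - 1)) hconj

end Real

section InnerProductSpace

variable {E : Type*} [NormedAddCommGroup E] [InnerProductSpace ℝ E]

theorem inner_norm_rpow_sub_two_smul_self {r : ℝ} (hr : r ≠ 0) (x : E) :
    ⟪‖x‖ ^ (r - 2) • x, x⟫ = ‖x‖ ^ r := by
  rw [real_inner_smul_left, real_inner_self_eq_norm_sq]
  rcases (norm_nonneg x).eq_or_lt with hx | hx
  · rw [← hx, Real.zero_rpow hr]
    ring
  · rw [← Real.rpow_two, ← Real.rpow_add hx]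
    ring_nf

theorem inner_norm_rpow_sub_two_smul_le (r : ℝ) (x y : E) :
    ⟪‖y‖ ^ (r - 2) • y, x⟫ ≤ ‖x‖ * ‖y‖ ^ (r - 1) := by
  rcases (norm_nonneg y).eq_or_lt with hy | hy
  · rw [norm_eq_zero.mp hy.symm, smul_zero, inner_zero_left]
    positivity
  · calc ⟪‖y‖ ^ (r - 2) • y, x⟫ = ‖y‖ ^ (r - 2) * ⟪y, x⟫ := real_inner_smul_left _ _ _
      _ ≤ ‖y‖ ^ (r - 2) * (‖y‖ * ‖x‖) := by gcongr; exact real_inner_le_norm y x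
      _ = ‖x‖ * ‖y‖ ^ (r - 1) := by
        rw [← mul_assoc, ← Real.rpow_add_one hy.ne']
        ring_nf

theorem inner_norm_rpow_sub_two_smul_sub_ge {r : ℝ} (hr : 1 < r) (x y : E) :
    (r - 1) / r * (‖x‖ ^ r - ‖y‖ ^ r) ≤ ⟪‖x‖ ^ (r - 2) • x - ‖y‖ ^ (r - 2) • y, x⟫ := by
  have hdiag := inner_norm_rpow_sub_two_smul_self (by linarith : r ≠ 0) x
  have hcross := inner_norm_rpow_sub_two_smul_le r x y
  have hyoung := Real.mul_rpow_sub_one_le (norm_nonneg x) (norm_nonneg y) hr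
  have hsplit : ‖x‖ ^ r = ‖x‖ ^ r / r + (r - 1) / r * ‖x‖ ^ r := by
    field_simp
    ring
  rw [inner_sub_left, hdiag]
  linarith

end InnerProductSpace

theorem rpow_vector_field_coercivity_general (n : ℕ) (r : ℝ) (hr : 1 < r)
    (c d : EuclideanSpace ℝ (Fin n)) :
    ⟪(‖c‖ ^ (r - 2)) • c - (‖d‖ ^ (r - 2)) • d, c⟫ ≥
      ((r - 1) / r) * (‖c‖ ^ r - ‖d‖ ^ r) :=
  inner_norm_rpow_sub_two_smul_sub_ge hr c d

/-- For every `r > 1` and all `c, d ∈ ℝ^d` (`d ≥ 1`):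
`⟪‖c‖^(r-2) c - ‖d‖^(r-2) d, c⟫ ≥ ((r-1)/r)(‖c‖^r - ‖d‖^r)`. -/
theorem rpow_vector_field_coercivity (n : ℕ) (hn : 1 ≤ n) (r : ℝ) (hr : 1 < r)
    (c d : EuclideanSpace ℝ (Fin n)) :
    ⟪(‖c‖ ^ (r - 2)) • c - (‖d‖ ^ (r - 2)) • d, c⟫ ≥
      ((r - 1) / r) * (‖c‖ ^ r - ‖d‖ ^ r) :=
  rpow_vector_field_coercivity_general n r hr c d
end

section
/- Let (X, μ) be a finite measure space, let r ∈ (1, 2) with conjugate exponent p (1/r + 1/p = 1), and let m : X → ℝ be measurable with 0 < m₀ ≤ m(x) ≤ m₁ for μ-a.e. x. Let q ∈ L^r(μ; ℝ²) and g ∈ L^p(μ; ℝ²). Suppose that for every v ∈ L^r(μ; ℝ²) one has ∫_X ⟨g(x), v(x) − q(x)⟩ dμ(x) ≥ ∫_X m(x) ‖v(x)‖^{r−2} ⟨v(x), q(x) − v(x)⟩ dμ(x). Then for every v ∈ L^r(μ; ℝ²): ∫_X m(x) ‖q(x)‖^{r−2} ⟨q(x), v(x)⟩ dμ(x) + ∫_X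 ⟨g(x), v(x)⟩ dμ(x) = 0. -/
/-!
Minty's trick: testing the hypothesis with `v = q + t w` and dividing by `t > 0` gives
`∫ m ⟪‖q + t w‖^(r-2) (q + t w), w⟫ + ∫ ⟪g, w⟫ ≥ 0`. Since `c ↦ ‖c‖^(r-2) c` is continuous for
`r > 1` and grows like `‖c‖^(r-1)`, dominated convergence lets `t → 0⁺`, and applying the
resulting inequality to both `w = v` and `w = -v` forces equality.
-/
open MeasureTheory RealInnerProductSpace Filter Topology

section PowerLaw

variable {E : Type*} [NormedAddCommGroup E] [InnerProductSpace ℝ E]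

noncomputable def powerLaw (r : ℝ) (c : E) : E := ‖c‖ ^ (r - 2) • c

lemma inner_powerLaw (r : ℝ) (c w : E) : ⟪powerLaw r c, w⟫ = ‖c‖ ^ (r - 2) * ⟪c, w⟫ :=
  real_inner_smul_left _ _ _

lemma norm_powerLaw {r : ℝ} (hr : r ≠ 1) (c : E) : ‖powerLaw r c‖ = ‖c‖ ^ (r - 1) := by
  rcases eq_or_ne c 0 with rfl | hc
  · simp [powerLaw, Real.zero_rpow (sub_ne_zero.2 hr)]
  · have hc' : ‖c‖ ≠ 0 := norm_ne_zero_iff.2 hc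
    rw [powerLaw, norm_smul, Real.norm_of_nonneg (by positivity),
      show r - 1 = r - 2 + 1 by ring, Real.rpow_add_one hc']

lemma continuous_powerLaw {r : ℝ} (hr : 1 < r) : Continuous (powerLaw (E := E) r) := by
  refine continuous_iff_continuousAt.2 fun c => ?_
  rcases eq_or_ne c 0 with rfl | hc
  · have hnorm : Tendsto (fun c : E => ‖c‖ ^ (r - 1)) (𝓝 0) (𝓝 0) := by
      simpa [Real.zero_rpow (sub_pos.2 hr).ne'] using
        ((continuous_norm.continuousAt (x := (0 : E))).rpow_const
          (Or.inr (sub_pos.2 hr).le)).tendsto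
    rw [ContinuousAt, show powerLaw r (0 : E) = 0 from smul_zero _,
      tendsto_zero_iff_norm_tendsto_zero]
    simpa only [norm_powerLaw hr.ne'] using hnorm
  · exact (continuous_norm.continuousAt.rpow_const (Or.inl (norm_ne_zero_iff.2 hc))).smul
      continuousAt_id

lemma abs_inner_powerLaw_add_smul_le {r : ℝ} (hr : 1 < r) (q w : E) {t : ℝ} (ht : |t| ≤ 1) :
    |⟪powerLaw r (q + t • w), w⟫| ≤ (‖q‖ + ‖w‖) ^ r := by
  have hseg : ‖q + t • w‖ ≤ ‖q‖ + ‖w‖ := by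
    calc ‖q + t • w‖ ≤ ‖q‖ + |t| * ‖w‖ := by
          simpa [norm_smul] using norm_add_le q (t • w)
      _ ≤ ‖q‖ + ‖w‖ := by gcongr; exact mul_le_of_le_one_left (norm_nonneg w) ht
  calc |⟪powerLaw r (q + t • w), w⟫| ≤ ‖q + t • w‖ ^ (r - 1) * ‖w‖ := by
        rw [← norm_powerLaw hr.ne']; exact abs_real_inner_le_norm _ _
    _ ≤ (‖q‖ + ‖w‖) ^ (r - 1) * (‖q‖ + ‖w‖) := by
        gcongr
        exact le_add_of_nonneg_left (norm_nonneg q)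
    _ = (‖q‖ + ‖w‖) ^ r := by
        rw [← Real.rpow_add_one' (by positivity) (by linarith), sub_add_cancel]

end PowerLaw

section Minty

variable {X E : Type*} [MeasurableSpace X] {μ : Measure X}
  [NormedAddCommGroup E] [InnerProductSpace ℝ E]
  {r M : ℝ} {m : X → ℝ} {q g w : X → E}

lemma continuousAt_integral_inner_powerLaw_add_smul (hr : 1 < r)
    (hm : AEStronglyMeasurable m μ) (hmM : ∀ᵐ x ∂μ, |m x| ≤ M)
    (hq : MemLp q (ENNReal.ofReal r) μ) (hw : MemLp w (ENNReal.ofReal r) μ) :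
    ContinuousAt (fun t : ℝ => ∫ x, m x * ⟪powerLaw r (q x + t • w x), w x⟫ ∂μ) 0 := by
  have hr0 : 0 < r := one_pos.trans hr
  have hbound : Integrable (fun x => M * (‖q x‖ + ‖w x‖) ^ r) μ := by
    have h := (hq.norm.add hw.norm).integrable_norm_rpow (by simpa using hr0) (by simp)
    simp only [ENNReal.toReal_ofReal hr0.le, Pi.add_apply, Real.norm_eq_abs] at h
    refine (h.congr (Eventually.of_forall fun x => ?_)).const_mul M
    simp only [abs_of_nonneg (by positivity : 0 ≤ ‖q x‖ + ‖w x‖)]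
  refine continuousAt_of_dominated (bound := fun x => M * (‖q x‖ + ‖w x‖) ^ r)
    (Eventually.of_forall fun t => ?_) ?_ hbound (Eventually.of_forall fun x => ?_)
  · exact hm.mul (((continuous_powerLaw hr).comp_aestronglyMeasurable
      (hq.1.add (hw.1.const_smul t))).inner hw.1)
  · filter_upwards [Metric.closedBall_mem_nhds (0 : ℝ) one_pos] with t ht
    filter_upwards [hmM] with x hx
    rw [Real.norm_eq_abs, abs_mul]
    exact mul_le_mul hx (abs_inner_powerLaw_add_smul_le hr _ _ (by simpa using ht))
      (abs_nonneg _) ((abs_nonneg _).trans hx)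
  · exact continuousAt_const.mul ((((continuous_powerLaw hr).comp
      (continuous_const.add (continuous_id.smul continuous_const))).inner
      continuous_const).continuousAt)

lemma integral_inner_powerLaw_add_integral_inner_nonneg (hr : 1 < r)
    (hm : AEStronglyMeasurable m μ) (hmM : ∀ᵐ x ∂μ, |m x| ≤ M)
    (hq : MemLp q (ENNReal.ofReal r) μ)
    (hineq : ∀ v : X → E, MemLp v (ENNReal.ofReal r) μ →
      ∫ x, ⟪g x, v x - q x⟫ ∂μ ≥ ∫ x, m x * ⟪powerLaw r (v x), q x - v x⟫ ∂μ)
    (hw : MemLp w (ENNReal.ofReal r) μ) :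
    0 ≤ (∫ x, m x * ⟪powerLaw r (q x), w x⟫ ∂μ) + ∫ x, ⟪g x, w x⟫ ∂μ := by
  set F : ℝ → ℝ := fun t => ∫ x, m x * ⟪powerLaw r (q x + t • w x), w x⟫ ∂μ
  have hF : ∀ t > 0, 0 ≤ F t + ∫ x, ⟪g x, w x⟫ ∂μ := by
    intro t ht
    have h := hineq _ (hq.add (hw.const_smul t))
    have hlhs : ∫ x, ⟪g x, (q + t • w) x - q x⟫ ∂μ = t * ∫ x, ⟪g x, w x⟫ ∂μ := by
      simp only [Pi.add_apply, Pi.smul_apply, add_sub_cancel_left, inner_smul_right,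
        integral_const_mul]
    have hrhs : ∫ x, m x * ⟪powerLaw r ((q + t • w) x), q x - (q + t • w) x⟫ ∂μ = -t * F t := by
      rw [← integral_const_mul]
      congr 1 with x
      simp only [Pi.add_apply, Pi.smul_apply, sub_add_cancel_left, inner_neg_right,
        inner_smul_right]
      ring
    rw [hlhs, hrhs] at h
    exact nonneg_of_mul_nonneg_right (by linarith) ht
  have hlim := ((continuousAt_integral_inner_powerLaw_add_smul hr hm hmM hq hw).tendsto.mono_left
    (nhdsWithin_le_nhds (s := Set.Ioi 0))).add_const (∫ x, ⟪g x, w x⟫ ∂μ)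
  simp only [zero_smul, add_zero] at hlim
  exact ge_of_tendsto hlim (eventually_nhdsWithin_of_forall hF)

end Minty

theorem minty_passage_power_law_general {X : Type*} [MeasurableSpace X] (μ : Measure X)
    (r : ℝ) (hr1 : 1 < r)
    (m : X → ℝ) (hm : Measurable m) (m₀ m₁ : ℝ)
    (hmbd : ∀ᵐ x ∂μ, m₀ ≤ m x ∧ m x ≤ m₁)
    (q g : X → EuclideanSpace ℝ (Fin 2))
    (hq : MemLp q (ENNReal.ofReal r) μ)
    (hineq : ∀ v : X → EuclideanSpace ℝ (Fin 2), MemLp v (ENNReal.ofReal r) μ →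
      ∫ x, ⟪g x, v x - q x⟫ ∂μ ≥ ∫ x, m x * (‖v x‖ ^ (r - 2) * ⟪v x, q x - v x⟫) ∂μ) :
    ∀ v : X → EuclideanSpace ℝ (Fin 2), MemLp v (ENNReal.ofReal r) μ →
      (∫ x, m x * (‖q x‖ ^ (r - 2) * ⟪q x, v x⟫) ∂μ) + (∫ x, ⟪g x, v x⟫ ∂μ) = 0 := by
  intro v hv
  simp only [← inner_powerLaw] at hineq ⊢
  have hM : ∀ᵐ x ∂μ, |m x| ≤ max |m₀| |m₁| :=
    hmbd.mono fun x hx => abs_le_max_abs_abs hx.1 hx.2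
  have hpos := integral_inner_powerLaw_add_integral_inner_nonneg hr1 hm.aestronglyMeasurable
    hM hq hineq hv
  have hneg := integral_inner_powerLaw_add_integral_inner_nonneg hr1 hm.aestronglyMeasurable
    hM hq hineq hv.neg
  simp only [Pi.neg_apply, inner_neg_right, mul_neg, integral_neg] at hneg
  linarith

/-- Minty-type passage: on a finite measure space, with `r ∈ (1,2)`, conjugate `p`,
`m` measurable with `0 < m₀ ≤ m ≤ m₁` a.e., `q ∈ L^r`, `g ∈ L^p`, if
`∫ ⟪g, v - q⟫ ≥ ∫ m ‖v‖^(r-2) ⟪v, q - v⟫` for all `v ∈ L^r`, then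
`∫ m ‖q‖^(r-2) ⟪q, v⟫ + ∫ ⟪g, v⟫ = 0` for all `v ∈ L^r`. -/
theorem minty_passage_power_law {X : Type*} [MeasurableSpace X] (μ : Measure X)
    [IsFiniteMeasure μ] (r p : ℝ) (hr1 : 1 < r) (hr2 : r < 2) (hrp : 1 / r + 1 / p = 1)
    (m : X → ℝ) (hm : Measurable m) (m₀ m₁ : ℝ) (hm₀ : 0 < m₀)
    (hmbd : ∀ᵐ x ∂μ, m₀ ≤ m x ∧ m x ≤ m₁)
    (q g : X → EuclideanSpace ℝ (Fin 2))
    (hq : MemLp q (ENNReal.ofReal r) μ) (hg : MemLp g (ENNReal.ofReal p) μ)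
    (hineq : ∀ v : X → EuclideanSpace ℝ (Fin 2), MemLp v (ENNReal.ofReal r) μ →
      ∫ x, ⟪g x, v x - q x⟫ ∂μ ≥ ∫ x, m x * (‖v x‖ ^ (r - 2) * ⟪v x, q x - v x⟫) ∂μ) :
    ∀ v : X → EuclideanSpace ℝ (Fin 2), MemLp v (ENNReal.ofReal r) μ →
      (∫ x, m x * (‖q x‖ ^ (r - 2) * ⟪q x, v x⟫) ∂μ) + (∫ x, ⟪g x, v x⟫ ∂μ) = 0 :=
  minty_passage_power_law_general μ r hr1 m hm m₀ m₁ hmbd q g hq hineq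
end
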